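/- Consider the split-signature metric g = x² dt² + dt dz + dz dt + dx dy + dy dx on ℝ⁴ with coordinates (t,x,y,z). Then g is Ricci-flat, and for any constants c⁰, c', c'' ∈ ℝ the function σ = c⁰ + c' t + c'' x satisfies ∇∇σ + P σ = 0, where ∇ is the Levi-Civita connection and P the Schouten tensor of g. Hence the space of such almost Einstein scales is 3-dimensional. Moreover each dσ is null: g⁻¹(dσ,dσ) = 0. -/

import Mathlib

noncomputable section

/-- Partial derivative of a function on `ι → ℝ` in the `i`-th coordinate direction. -/
def pderiv' {ι : Type} [Fintype ι] [DecidableEq ι]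
    (i : ι) (f : (ι → ℝ) → ℝ) (x : ι → ℝ) : ℝ :=
  fderiv ℝ f x (Pi.single i 1)

/-- Christoffel symbols `Γ^k_{ij}` of the metric `g` (with pointwise inverse `ginv`). -/
def christoffel {ι : Type} [Fintype ι] [DecidableEq ι]
    (g ginv : (ι → ℝ) → ι → ι → ℝ) (k i j : ι) (x : ι → ℝ) : ℝ :=
  (1/2) * ∑ l, ginv x k l *
    (pderiv' i (fun y => g y l j) x + pderiv' j (fun y => g y l i) x
      - pderiv' l (fun y => g y i j) x)

/-- Curvature tensor `R^l_{ijk}`, i.e. `R(∂_i,∂_j)∂_k = R^l_{ijk} ∂_l`. -/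
def riemUp {ι : Type} [Fintype ι] [DecidableEq ι]
    (g ginv : (ι → ℝ) → ι → ι → ℝ) (l i j k : ι) (x : ι → ℝ) : ℝ :=
  pderiv' i (fun y => christoffel g ginv l j k y) x
    - pderiv' j (fun y => christoffel g ginv l i k y) x
    + ∑ m, christoffel g ginv l i m x * christoffel g ginv m j k x
    - ∑ m, christoffel g ginv l j m x * christoffel g ginv m i k x

/-- Ricci curvature `Ric_{jk} = R^l_{l j k}`. -/
def ricciT {ι : Type} [Fintype ι] [DecidableEq ι]
    (g ginv : (ι → ℝ) → ι → ι → ℝ) (i j : ι) (x : ι → ℝ) : ℝ :=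
  ∑ l, riemUp g ginv l l i j x

/-- Scalar curvature. -/
def scalT {ι : Type} [Fintype ι] [DecidableEq ι]
    (g ginv : (ι → ℝ) → ι → ι → ℝ) (x : ι → ℝ) : ℝ :=
  ∑ i, ∑ j, ginv x i j * ricciT g ginv i j x

/-- Covariant Hessian `∇_i ∇_j σ` of a function. -/
def hessT {ι : Type} [Fintype ι] [DecidableEq ι]
    (g ginv : (ι → ℝ) → ι → ι → ℝ) (σ : (ι → ℝ) → ℝ) (i j : ι) (x : ι → ℝ) : ℝ :=
  pderiv' i (fun y => pderiv' j σ y) x - ∑ k, christoffel g ginv k i j x * pderiv' k σ x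

/-- Laplacian `Δσ = g^{ij} ∇_i∇_j σ`. -/
def lapT {ι : Type} [Fintype ι] [DecidableEq ι]
    (g ginv : (ι → ℝ) → ι → ι → ℝ) (σ : (ι → ℝ) → ℝ) (x : ι → ℝ) : ℝ :=
  ∑ i, ∑ j, ginv x i j * hessT g ginv σ i j x

/-- Schouten tensor `P = (1/(n-2))(Ric - (Sc/(2(n-1))) g)` in dimension `n`. -/
def schoutenT {ι : Type} [Fintype ι] [DecidableEq ι] (n : ℕ)
    (g ginv : (ι → ℝ) → ι → ι → ℝ) (i j : ι) (x : ι → ℝ) : ℝ :=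
  (1/((n:ℝ) - 2)) * (ricciT g ginv i j x - (scalT g ginv x / (2*((n:ℝ) - 1))) * g x i j)

/-- Trace `J = g^{ij} P_{ij}` of the Schouten tensor. -/
def schoutenTr {ι : Type} [Fintype ι] [DecidableEq ι] (n : ℕ)
    (g ginv : (ι → ℝ) → ι → ι → ℝ) (x : ι → ℝ) : ℝ :=
  ∑ i, ∑ j, ginv x i j * schoutenT n g ginv i j x

/-- The split-signature metric `x² dt² + 2 dt dz + 2 dx dy` on `ℝ⁴`,
coordinates `(t,x,y,z) = (0,1,2,3)`. -/
def gsplit (x : Fin 4 → ℝ) (i j : Fin 4) : ℝ :=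
  if i = 0 ∧ j = 0 then (x 1)^2
  else if (i = 0 ∧ j = 3) ∨ (i = 3 ∧ j = 0) then 1
  else if (i = 1 ∧ j = 2) ∨ (i = 2 ∧ j = 1) then 1 else 0

/-- The inverse of `gsplit`. -/
def gsplitInv (x : Fin 4 → ℝ) (i j : Fin 4) : ℝ :=
  if i = 3 ∧ j = 3 then -((x 1)^2)
  else if (i = 0 ∧ j = 3) ∨ (i = 3 ∧ j = 0) then 1
  else if (i = 1 ∧ j = 2) ∨ (i = 2 ∧ j = 1) then 1 else 0

/-! The only nonconstant component of `g` is `g_tt = x²`, so the Christoffel symbols are linear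
in `x`: `Γ^y_tt = -x`, `Γ^z_tx = Γ^z_xt = x`, all others vanish. A nonzero symbol has its upper
index in `{y, z}` and its lower indices in `{t, x}`; hence all products `Γ^a_bm Γ^m_cd` and traces
`Γ^l_lj` vanish, and the remaining Ricci term `∂_l Γ^l_ij` needs `l = x`, where `Γ^x = 0`. So `g`
is Ricci-flat and `P = 0`. For `σ = c⁰ + c't + c''x` the second partials vanish and `dσ` only has
`dt, dx` components, so `∇∇σ = -Γ^k ∂_kσ = 0` since `Γ^t = Γ^x = 0`; `dσ` is null because the
`(t, x)` block of `g⁻¹` is zero. -/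

section Coordinates

variable {ι : Type}

theorem hasFDerivAt_coord (j : ι) (x : ι → ℝ) :
    HasFDerivAt (fun y : ι → ℝ => y j) (ContinuousLinearMap.proj j : (ι → ℝ) →L[ℝ] ℝ) x :=
  hasFDerivAt_apply j x

variable [DecidableEq ι]

theorem linearIndependent_one_coord_coord {j l : ι} (hjl : j ≠ l) :
    LinearIndependent ℝ ![(fun _ : ι → ℝ => (1:ℝ)), (fun x => x j), (fun x => x l)] := by
  refine Fintype.linearIndependent_iff.mpr fun c hc => ?_
  have h₀ := congrFun hc 0
  have hj := congrFun hc (Pi.single j 1)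
  have hl := congrFun hc (Pi.single l 1)
  simp [Fin.sum_univ_three, hjl, hjl.symm] at h₀ hj hl
  intro k
  fin_cases k <;> simp <;> linarith

variable [Fintype ι]

theorem pderiv'_const (i : ι) (c : ℝ) (x : ι → ℝ) : pderiv' i (fun _ => c) x = 0 := by
  simp [pderiv']

theorem pderiv'_const_mul_apply (i j : ι) (c : ℝ) (x : ι → ℝ) :
    pderiv' i (fun y => c * y j) x = if i = j then c else 0 := by
  rw [pderiv', ((hasFDerivAt_coord j x).const_mul c).fderiv]
  simp [Pi.single_apply, eq_comm]

theorem pderiv'_apply_sq (i j : ι) (x : ι → ℝ) :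
    pderiv' i (fun y => y j ^ 2) x = if i = j then 2 * x j else 0 := by
  rw [pderiv', ((hasFDerivAt_coord j x).pow 2).fderiv]
  simp [Pi.single_apply, eq_comm]

theorem pderiv'_affine (c₀ a b : ℝ) (j l i : ι) (x : ι → ℝ) :
    pderiv' i (fun y => c₀ + a * y j + b * y l) x =
      (if i = j then a else 0) + (if i = l then b else 0) := by
  have h := (((hasFDerivAt_coord j x).const_mul a).const_add c₀).fun_add
    ((hasFDerivAt_coord l x).const_mul b)
  rw [pderiv', h.fderiv]
  simp [Pi.single_apply, eq_comm]

end Coordinates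

theorem pderiv'_gsplit (m i j : Fin 4) (x : Fin 4 → ℝ) :
    pderiv' m (fun y => gsplit y i j) x = if i = 0 ∧ j = 0 ∧ m = 1 then 2 * x 1 else 0 := by
  by_cases h : i = 0 ∧ j = 0
  · obtain ⟨rfl, rfl⟩ := h
    simp only [gsplit, and_self, if_true, pderiv'_apply_sq, true_and]
  · have hconst : (fun y : Fin 4 → ℝ => gsplit y i j) = fun _ => gsplit 0 i j := by
      funext y; simp [gsplit, h]
    rw [hconst, pderiv'_const, if_neg fun h' => h ⟨h'.1, h'.2.1⟩]

def christoffelCoeff (k i j : Fin 4) : ℝ :=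
  if k = 2 ∧ i = 0 ∧ j = 0 then -1
  else if k = 3 ∧ ((i = 0 ∧ j = 1) ∨ (i = 1 ∧ j = 0)) then 1 else 0

theorem christoffel_gsplit (k i j : Fin 4) (x : Fin 4 → ℝ) :
    christoffel gsplit gsplitInv k i j x = christoffelCoeff k i j * x 1 := by
  fin_cases k <;> fin_cases i <;> fin_cases j <;>
    simp [christoffel, pderiv'_gsplit, gsplitInv, christoffelCoeff]

theorem christoffelCoeff_ne_zero {k i j : Fin 4} (h : christoffelCoeff k i j ≠ 0) :
    2 ≤ (k : ℕ) ∧ (i : ℕ) < 2 ∧ (j : ℕ) < 2 := by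
  unfold christoffelCoeff at h
  split_ifs at h with h₁ h₂
  · obtain ⟨rfl, rfl, rfl⟩ := h₁; decide
  · obtain ⟨rfl, ⟨rfl, rfl⟩ | ⟨rfl, rfl⟩⟩ := h₂ <;> decide
  · exact absurd rfl h

theorem christoffelCoeff_of_lt_two {k : Fin 4} (hk : (k : ℕ) < 2) (i j : Fin 4) :
    christoffelCoeff k i j = 0 := by
  by_contra h
  have := (christoffelCoeff_ne_zero h).1
  omega

theorem christoffelCoeff_self_left (k j : Fin 4) : christoffelCoeff k k j = 0 := by
  by_contra h
  have := christoffelCoeff_ne_zero h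
  omega

theorem christoffelCoeff_mul_christoffelCoeff (a b m c d : Fin 4) :
    christoffelCoeff a b m * christoffelCoeff m c d = 0 := by
  by_contra h
  have h₁ := christoffelCoeff_ne_zero (left_ne_zero_of_mul h)
  have h₂ := christoffelCoeff_ne_zero (right_ne_zero_of_mul h)
  omega

theorem riemUp_gsplit_self (l i j : Fin 4) (x : Fin 4 → ℝ) :
    riemUp gsplit gsplitInv l l i j x = 0 := by
  have hdiv : (if l = 1 then christoffelCoeff l i j else 0) = 0 := by
    split_ifs with hl
    · exact christoffelCoeff_of_lt_two (by simp [hl]) i j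
    · rfl
  simp [riemUp, christoffel_gsplit, pderiv'_const_mul_apply, pderiv'_const, hdiv,
    christoffelCoeff_self_left, mul_mul_mul_comm _ (x 1), christoffelCoeff_mul_christoffelCoeff]

theorem ricciT_gsplit (i j : Fin 4) (x : Fin 4 → ℝ) : ricciT gsplit gsplitInv i j x = 0 :=
  Finset.sum_eq_zero fun l _ => riemUp_gsplit_self l i j x

theorem schoutenT_gsplit (i j : Fin 4) (x : Fin 4 → ℝ) :
    schoutenT 4 gsplit gsplitInv i j x = 0 := by
  simp [schoutenT, scalT, ricciT_gsplit]

theorem pderiv'_affine_of_two_le (c₀ a b : ℝ) {k : Fin 4} (hk : 2 ≤ (k : ℕ)) (x : Fin 4 → ℝ) :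
    pderiv' k (fun y => c₀ + a * y 0 + b * y 1) x = 0 := by
  rw [pderiv'_affine, if_neg (by rintro rfl; simp at hk), if_neg (by rintro rfl; simp at hk),
    add_zero]

theorem hessT_gsplit_affine (c₀ a b : ℝ) (i j : Fin 4) (x : Fin 4 → ℝ) :
    hessT gsplit gsplitInv (fun y => c₀ + a * y 0 + b * y 1) i j x = 0 := by
  have hdσ (k : Fin 4) : (fun y => pderiv' k (fun y => c₀ + a * y 0 + b * y 1) y) =
      fun _ => (if k = 0 then a else 0) + (if k = 1 then b else 0) :=
    funext (pderiv'_affine c₀ a b 0 1 k)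
  rw [hessT, hdσ, pderiv'_const, zero_sub, neg_eq_zero]
  refine Finset.sum_eq_zero fun k _ => ?_
  rw [christoffel_gsplit]
  by_cases hk : (k : ℕ) < 2
  · rw [christoffelCoeff_of_lt_two hk, zero_mul, zero_mul]
  · rw [pderiv'_affine_of_two_le c₀ a b (not_lt.mp hk), mul_zero]

theorem gsplitInv_of_lt_two (x : Fin 4 → ℝ) {i j : Fin 4} (hi : (i : ℕ) < 2) (hj : (j : ℕ) < 2) :
    gsplitInv x i j = 0 := by
  unfold gsplitInv
  split_ifs <;> first | rfl | omega

theorem gsplitInv_affine_null (c₀ a b : ℝ) (x : Fin 4 → ℝ) :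
    ∑ i, ∑ j, gsplitInv x i j * pderiv' i (fun y => c₀ + a * y 0 + b * y 1) x *
      pderiv' j (fun y => c₀ + a * y 0 + b * y 1) x = 0 := by
  refine Finset.sum_eq_zero fun i _ => Finset.sum_eq_zero fun j _ => ?_
  by_cases hi : (i : ℕ) < 2
  · by_cases hj : (j : ℕ) < 2
    · rw [gsplitInv_of_lt_two x hi hj, zero_mul, zero_mul]
    · rw [pderiv'_affine_of_two_le c₀ a b (not_lt.mp hj), mul_zero]
  · rw [pderiv'_affine_of_two_le c₀ a b (not_lt.mp hi), mul_zero, zero_mul]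

/-- the split pp-wave metric is Ricci-flat, the functions
`σ = c⁰ + c' t + c'' x` satisfy `∇∇σ + Pσ = 0`, they form a 3-dimensional space of
almost Einstein scales, and each `dσ` is null. -/
theorem split_ppwave_almost_einstein_scales :
    (∀ (x : Fin 4 → ℝ) (i j : Fin 4), ricciT gsplit gsplitInv i j x = 0) ∧
    (∀ (c0 c' c'' : ℝ) (σ : (Fin 4 → ℝ) → ℝ),
      σ = (fun x => c0 + c' * x 0 + c'' * x 1) →
      (∀ (x : Fin 4 → ℝ) (i j : Fin 4),
        hessT gsplit gsplitInv σ i j x + schoutenT 4 gsplit gsplitInv i j x * σ x = 0) ∧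
      (∀ x : Fin 4 → ℝ,
        ∑ i, ∑ j, gsplitInv x i j * pderiv' i σ x * pderiv' j σ x = 0)) ∧
    LinearIndependent ℝ
      ![(fun _ : Fin 4 → ℝ => (1:ℝ)), (fun x => x 0), (fun x => x 1)] := by
  refine ⟨fun x i j => ricciT_gsplit i j x, ?_, linearIndependent_one_coord_coord (by decide)⟩
  rintro c₀ a b σ rfl
  refine ⟨fun x i j => ?_, gsplitInv_affine_null c₀ a b⟩
  rw [hessT_gsplit_affine, schoutenT_gsplit, zero_mul, add_zero]
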